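/- arXiv:2203.03458 — 2 statements merged into one kernel-verified Lean document; each statement's English description precedes it below -/
import Mathlib

section
/- Let $(\Omega,\mathcal{F},\mathbb{P})$ be a probability space and let $E = L^2(\Omega,\mathbb{P};\mathbb{R})$ with norm $\|\cdot\|_\omega$. Fix integers $n_M \geq 0$ and $N_T > n_M$, a real $\Delta t > 0$, a map $N : E^{n_M+1} \to E$, and a constant $\Lambda \geq 0$ such that for all $V = (V_0,\ldots,V_{n_M})$ and $U = (U_0,\ldots,U_{n_M})$ in $E^{n_M+1}$, $\|N(V) - N(U)\|_\omega \leq \Lambda \sum_{k=0}^{n_M} \|V_k - U_k\|_\omega$. Let $u, v : \{0,\ldots,N_T\} \to E$ and $\tau : \{n_M+1,\ldots,N_T\} \to E$ satisfy: (i) $v_{n+1} = v_n + N(v_n, v_{n-1}, \ldots, v_{n-n_M})$ for all $n_M \leq n < N_T$; (ii) $u_{n+1} = u_n + N(u_n, u_{n-1}, \ldots, u_{n-n_M}) + \Delta t \cdot \tau_{n+1}$ for all $n_M \leq n < N_T$; (iii) $v_n = u_n$ for all $0 \leq n \leq n_M$. Let $\tau_{max} \geq \max_{n_M < n \leq N_T}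 \|\tau_n\|_\omega$. Then for every $n$ with $n_M \leq n \leq N_T$, $\|v_n - u_n\|_\omega \leq \tau_{max} \cdot n \Delta t \cdot e^{\, n (n_M+1) \Lambda}$. -/
open MeasureTheory
open scoped BigOperators

/-!
The error `eₙ = ‖vₙ - uₙ‖` vanishes on the initial window and, by the triangle inequality and the
Lipschitz bound on `N`, obeys `eₙ₊₁ ≤ eₙ + Λ ∑ₖ eₙ₋ₖ + Δt τ_max`. A discrete Gronwall argument with
memory then bounds it by `Bₙ = Δt τ_max · n · exp (n (n_M+1) Λ)`: since `B` is monotone, the memory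
sum is at most `(n_M+1) Bₙ`, and `1 + (n_M+1) Λ ≤ exp ((n_M+1) Λ)` makes `B` a supersolution.
-/

section DiscreteGronwall

variable {c a : ℝ}

theorem monotone_mul_natCast_mul_exp (hc : 0 ≤ c) (ha : 0 ≤ a) :
    Monotone fun n : ℕ => c * n * Real.exp (n * a) := by
  intro m n hmn
  have hmn' : (m : ℝ) ≤ n := Nat.cast_le.mpr hmn
  dsimp only
  gcongr

theorem mul_natCast_mul_exp_mul_one_add_add_le (hc : 0 ≤ c) (ha : 0 ≤ a) (m : ℕ) :
    c * m * Real.exp (m * a) * (1 + a) + c ≤ c * (m + 1 : ℕ) * Real.exp ((m + 1 : ℕ) * a) := by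
  have hexp : Real.exp (m * a) * (1 + a) ≤ Real.exp ((m + 1 : ℕ) * a) := by
    calc Real.exp (m * a) * (1 + a) ≤ Real.exp (m * a) * Real.exp a := by
          gcongr; linarith [Real.add_one_le_exp a]
      _ = Real.exp ((m + 1 : ℕ) * a) := by rw [← Real.exp_add]; push_cast; ring_nf
  have hone : 1 ≤ Real.exp ((m + 1 : ℕ) * a) := Real.one_le_exp (by positivity)
  calc c * m * Real.exp (m * a) * (1 + a) + c
      ≤ c * m * Real.exp ((m + 1 : ℕ) * a) + c * Real.exp ((m + 1 : ℕ) * a) := by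
        rw [mul_assoc (c * m)]
        gcongr
        exact le_mul_of_one_le_right hc hone
    _ = c * (m + 1 : ℕ) * Real.exp ((m + 1 : ℕ) * a) := by push_cast; ring

/-- Discrete Gronwall inequality for a recursion with a memory of `p + 1` steps. -/
theorem le_mul_natCast_mul_exp_of_le_memory_sum {e : ℕ → ℝ} {p T : ℕ} {L : ℝ}
    (hc : 0 ≤ c) (hL : 0 ≤ L) (hinit : ∀ n ≤ p, e n ≤ 0)
    (hstep : ∀ m, p ≤ m → m < T → e (m + 1) ≤ e m + L * ∑ k : Fin (p + 1), e (m - k) + c) :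
    ∀ n ≤ T, e n ≤ c * n * Real.exp (n * ((p + 1) * L)) := by
  set a := (p + 1 : ℝ) * L
  have ha : 0 ≤ a := by positivity
  set B : ℕ → ℝ := fun n => c * n * Real.exp (n * a)
  have hB_mono : Monotone B := monotone_mul_natCast_mul_exp hc ha
  intro n
  induction n using Nat.strong_induction_on with
  | _ n ih =>
    intro hnT
    rcases le_or_gt n p with hnp | hpn
    · exact (hinit n hnp).trans (by positivity)
    obtain ⟨m, rfl⟩ : ∃ m, n = m + 1 := ⟨n - 1, by omega⟩
    have hmemory : ∑ k : Fin (p + 1), e (m - k) ≤ (p + 1) * B m :=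
      calc ∑ k : Fin (p + 1), e (m - k) ≤ ∑ _k : Fin (p + 1), B m :=
            Finset.sum_le_sum fun k _ =>
              (ih (m - k) (by omega) (by omega)).trans (hB_mono (Nat.sub_le m k))
        _ = (p + 1) * B m := by simp
    calc e (m + 1) ≤ e m + L * ∑ k : Fin (p + 1), e (m - k) + c := hstep m (by omega) (by omega)
      _ ≤ B m + L * ((p + 1) * B m) + c := by
        gcongr
        exact ih m (by omega) (by omega)
      _ = B m * (1 + a) + c := by ring
      _ ≤ B (m + 1) := mul_natCast_mul_exp_mul_one_add_add_le hc ha m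

end DiscreteGronwall

theorem norm_add_sub_add_add_smul_le {E : Type*} [SeminormedAddCommGroup E] [NormedSpace ℝ E]
    {ι : Type*} [Fintype ι] {N : (ι → E) → E} {Λ : ℝ}
    (hLip : ∀ V U : ι → E, ‖N V - N U‖ ≤ Λ * ∑ k, ‖V k - U k‖)
    (x y τ : E) (X Y : ι → E) {Δt : ℝ} (hΔt : 0 ≤ Δt) :
    ‖(x + N X) - (y + N Y + Δt • τ)‖ ≤ ‖x - y‖ + Λ * ∑ k, ‖X k - Y k‖ + Δt * ‖τ‖ := by
  calc ‖(x + N X) - (y + N Y + Δt • τ)‖ = ‖(x - y) + (N X - N Y) - Δt • τ‖ := by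
        congr 1; abel
    _ ≤ ‖x - y‖ + ‖N X - N Y‖ + ‖Δt • τ‖ := norm_sub_le_of_le (norm_add_le _ _) le_rfl
    _ ≤ ‖x - y‖ + Λ * ∑ k, ‖X k - Y k‖ + Δt * ‖τ‖ := by
        rw [norm_smul_of_nonneg hΔt]
        gcongr
        exact hLip X Y

theorem dnn_flow_map_error_bound_general
    {Ω : Type*} [MeasurableSpace Ω] (P : Measure Ω)
    (nM NT : ℕ) (hNT : nM < NT)
    (Δt : ℝ) (hΔt : 0 < Δt)
    (N : (Fin (nM + 1) → Lp ℝ 2 P) → Lp ℝ 2 P)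
    (Λ : ℝ) (hΛ : 0 ≤ Λ)
    (hLip : ∀ V U : Fin (nM + 1) → Lp ℝ 2 P,
      ‖N V - N U‖ ≤ Λ * ∑ k, ‖V k - U k‖)
    (u v : ℕ → Lp ℝ 2 P) (τ : ℕ → Lp ℝ 2 P)
    (hv : ∀ n, nM ≤ n → n < NT → v (n + 1) = v n + N (fun k => v (n - (k : ℕ))))
    (hu : ∀ n, nM ≤ n → n < NT →
      u (n + 1) = u n + N (fun k => u (n - (k : ℕ))) + Δt • τ (n + 1))
    (hinit : ∀ n ≤ nM, v n = u n)
    (τmax : ℝ) (hτ : ∀ n, nM < n → n ≤ NT → ‖τ n‖ ≤ τmax) :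
    ∀ n, nM ≤ n → n ≤ NT →
      ‖v n - u n‖ ≤ τmax * (n * Δt) * Real.exp ((n : ℝ) * (nM + 1) * Λ) := by
  have hτmax : 0 ≤ τmax := (norm_nonneg _).trans (hτ (nM + 1) (Nat.lt_succ_self nM) hNT)
  have hbound := le_mul_natCast_mul_exp_of_le_memory_sum (e := fun n => ‖v n - u n‖)
    (mul_nonneg hΔt.le hτmax) hΛ (fun n hn => by simp [hinit n hn]) fun m hm hmT => by
      rw [hv m hm hmT, hu m hm hmT]
      refine (norm_add_sub_add_add_smul_le hLip _ _ _ _ _ hΔt.le).trans ?_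
      gcongr
      exact hτ (m + 1) (by omega) (by omega)
  intro n _ hnT
  calc ‖v n - u n‖ ≤ Δt * τmax * n * Real.exp (n * ((nM + 1) * Λ)) := hbound n hnT
    _ = τmax * (n * Δt) * Real.exp ((n : ℝ) * (nM + 1) * Λ) := by ring_nf

/-- Error bound for a DNN flow-map model with `n_M ≥ 0` memory steps
(the paper's main theorem).  With `E = L²(Ω, P; ℝ)`, a model map
`N : E^{n_M+1} → E` that is Lipschitz with constant `Λ`, model states `v`
satisfying `v_{n+1} = v_n + N(v_n, …, v_{n-n_M})`, exact states `u`
satisfying `u_{n+1} = u_n + N(u_n, …, u_{n-n_M}) + Δt τ_{n+1}` (defining the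
local truncation errors `τ`), exact initial data `v_n = u_n` for `n ≤ n_M`,
and `τ_max` bounding `‖τ_n‖` for `n_M < n ≤ N_T`, we have
`‖v_n - u_n‖ ≤ τ_max · n Δt · exp (n (n_M+1) Λ)` for `n_M ≤ n ≤ N_T`. -/
theorem dnn_flow_map_error_bound
    {Ω : Type*} [MeasurableSpace Ω] (P : Measure Ω) [IsProbabilityMeasure P]
    (nM NT : ℕ) (hNT : nM < NT)
    (Δt : ℝ) (hΔt : 0 < Δt)
    (N : (Fin (nM + 1) → Lp ℝ 2 P) → Lp ℝ 2 P)
    (Λ : ℝ) (hΛ : 0 ≤ Λ)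
    (hLip : ∀ V U : Fin (nM + 1) → Lp ℝ 2 P,
      ‖N V - N U‖ ≤ Λ * ∑ k, ‖V k - U k‖)
    (u v : ℕ → Lp ℝ 2 P) (τ : ℕ → Lp ℝ 2 P)
    (hv : ∀ n, nM ≤ n → n < NT → v (n + 1) = v n + N (fun k => v (n - (k : ℕ))))
    (hu : ∀ n, nM ≤ n → n < NT →
      u (n + 1) = u n + N (fun k => u (n - (k : ℕ))) + Δt • τ (n + 1))
    (hinit : ∀ n ≤ nM, v n = u n)
    (τmax : ℝ) (hτ : ∀ n, nM < n → n ≤ NT → ‖τ n‖ ≤ τmax) :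
    ∀ n, nM ≤ n → n ≤ NT →
      ‖v n - u n‖ ≤ τmax * (n * Δt) * Real.exp ((n : ℝ) * (nM + 1) * Λ) :=
  dnn_flow_map_error_bound_general P nM NT hNT Δt hΔt N Λ hΛ hLip u v τ hv hu hinit τmax hτ
end

section
/- Let $(\Omega,\mathcal{F},\mathbb{P})$ be a probability space and let $E = L^2(\Omega,\mathbb{P};\mathbb{R})$ with norm $\|\cdot\|_\omega$. Fix integers $n_M \geq 0$ and $N_T > n_M$, a real $\Delta t > 0$, a map $N : E^{n_M+1} \to E$, and a constant $\Lambda \geq 0$ such that $\|N(V) - N(U)\|_\omega \leq \Lambda \sum_{k=0}^{n_M} \|V_k - U_k\|_\omega$ for all $V, U \in E^{n_M+1}$. Let $u, v : \{0,\ldots,N_T\} \to E$ and $\tau : \{n_M+1,\ldots,N_T\} \to E$ satisfy $v_{n+1} = v_n + N(v_n,\ldots,v_{n-n_M})$ and $u_{n+1} = u_n + N(u_n,\ldots,u_{n-n_M}) + \Delta t \cdot \tau_{n+1}$ for $n_M \leq n < N_T$, with $v_n = u_n$ for $0 \leq n \leq n_M$. Let $\tau_{max} \geq \max_{n_M < n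 \leq N_T}\|\tau_n\|_\omega$ and set $e_n = u_n - v_n$. Then for every $j$ with $n_M < j \leq N_T$, $\|e_j\|_\omega \leq \tau_{max} \cdot j \Delta t + \Lambda (n_M + 1) \sum_{n=0}^{j-1} \|e_n\|_\omega$. -/
open MeasureTheory
open scoped BigOperators

/-- Key intermediate estimate in the proof of the paper's error-bound theorem.
With `E = L²(Ω, P; ℝ)`, a model map `N : E^{n_M+1} → E` Lipschitz with
constant `Λ`, model states `v` satisfying
`v_{n+1} = v_n + N(v_n, …, v_{n-n_M})`, exact states `u` satisfying
`u_{n+1} = u_n + N(u_n, …, u_{n-n_M}) + Δt τ_{n+1}`, exact initial data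
`v_n = u_n` for `n ≤ n_M`, `τ_max` bounding `‖τ_n‖` for `n_M < n ≤ N_T`, and
`e_n = u_n - v_n`, we have, for every `n_M < j ≤ N_T`,
`‖e_j‖ ≤ τ_max · j Δt + Λ (n_M+1) ∑_{n<j} ‖e_n‖`. -/
theorem dnn_flow_map_error_recursion_bound
    {Ω : Type*} [MeasurableSpace Ω] (P : Measure Ω) [IsProbabilityMeasure P]
    (nM NT : ℕ) (hNT : nM < NT)
    (Δt : ℝ) (hΔt : 0 < Δt)
    (N : (Fin (nM + 1) → Lp ℝ 2 P) → Lp ℝ 2 P)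
    (Λ : ℝ) (hΛ : 0 ≤ Λ)
    (hLip : ∀ V U : Fin (nM + 1) → Lp ℝ 2 P,
      ‖N V - N U‖ ≤ Λ * ∑ k, ‖V k - U k‖)
    (u v : ℕ → Lp ℝ 2 P) (τ : ℕ → Lp ℝ 2 P)
    (hv : ∀ n, nM ≤ n → n < NT → v (n + 1) = v n + N (fun k => v (n - (k : ℕ))))
    (hu : ∀ n, nM ≤ n → n < NT →
      u (n + 1) = u n + N (fun k => u (n - (k : ℕ))) + Δt • τ (n + 1))
    (hinit : ∀ n ≤ nM, v n = u n)
    (τmax : ℝ) (hτ : ∀ n, nM < n → n ≤ NT → ‖τ n‖ ≤ τmax) :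
    ∀ j, nM < j → j ≤ NT →
      ‖u j - v j‖ ≤ τmax * (j * Δt)
        + Λ * (nM + 1) * ∑ n ∈ Finset.range j, ‖u n - v n‖ := by
  set e : ℕ → Lp ℝ 2 P := fun n => u n - v n with he
  have hτ0 : 0 ≤ τmax := le_trans (norm_nonneg _) (hτ (nM + 1) (Nat.lt_succ_self _) hNT)
  -- one-step estimate
  have step : ∀ n, nM ≤ n → n < NT →
      ‖e (n + 1)‖ ≤ ‖e n‖ + Λ * ∑ k : Fin (nM + 1), ‖e (n - (k : ℕ))‖ + Δt * τmax := by
    intro n hn hn'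
    have hrec : e (n + 1) = e n
        + (N (fun k => u (n - (k : ℕ))) - N (fun k => v (n - (k : ℕ))))
        + Δt • τ (n + 1) := by
      simp only [he]
      rw [hu n hn hn', hv n hn hn']
      abel
    calc ‖e (n + 1)‖ ≤ ‖e n + (N (fun k => u (n - (k : ℕ))) - N (fun k => v (n - (k : ℕ))))‖
          + ‖Δt • τ (n + 1)‖ := by rw [hrec]; exact norm_add_le _ _
      _ ≤ ‖e n‖ + ‖N (fun k => u (n - (k : ℕ))) - N (fun k => v (n - (k : ℕ)))‖
          + ‖Δt • τ (n + 1)‖ := by gcongr; exact norm_add_le _ _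
      _ ≤ ‖e n‖ + Λ * ∑ k : Fin (nM + 1), ‖e (n - (k : ℕ))‖ + Δt * τmax := by
          gcongr
          · exact hLip _ _
          · rw [norm_smul, Real.norm_eq_abs, abs_of_pos hΔt]
            exact mul_le_mul_of_nonneg_left (hτ (n + 1) (Nat.lt_succ_of_le hn) hn') hΔt.le
  -- main induction with double sum
  have main : ∀ j, nM ≤ j → j ≤ NT →
      ‖e j‖ ≤ τmax * (((j - nM : ℕ) : ℝ) * Δt)
        + Λ * ∑ n ∈ Finset.Ico nM j, ∑ k : Fin (nM + 1), ‖e (n - (k : ℕ))‖ := by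
    intro j hj
    induction j, hj using Nat.le_induction with
    | base =>
      intro _
      have : e nM = 0 := by simp [he, hinit nM le_rfl]
      rw [this, norm_zero]
      positivity
    | succ j hj ih =>
      intro hjNT
      have hjNT' : j < NT := hjNT
      have := step j hj hjNT'
      have IH := ih hjNT'.le
      rw [Finset.sum_Ico_succ_top hj]
      have hsub : (j + 1 - nM : ℕ) = (j - nM) + 1 := by omega
      rw [hsub]
      push_cast
      have hDnn : (0:ℝ) ≤ ∑ n ∈ Finset.Ico nM j, ∑ k : Fin (nM + 1), ‖e (n - (k : ℕ))‖ :=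
        Finset.sum_nonneg fun n _ => Finset.sum_nonneg fun k _ => norm_nonneg _
      nlinarith [hDnn]
  intro j hj hjNT
  have H := main j hj.le hjNT
  -- bound the double sum
  have hdouble : ∑ n ∈ Finset.Ico nM j, ∑ k : Fin (nM + 1), ‖e (n - (k : ℕ))‖
      ≤ (nM + 1 : ℝ) * ∑ n ∈ Finset.range j, ‖e n‖ := by
    rw [Finset.sum_comm]
    have hone : ∀ k : Fin (nM + 1), ∑ n ∈ Finset.Ico nM j, ‖e (n - (k : ℕ))‖
        ≤ ∑ n ∈ Finset.range j, ‖e n‖ := by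
      intro k
      have hinj : Set.InjOn (fun n => n - (k : ℕ)) (Finset.Ico nM j) := by
        intro a ha b hb hab
        simp only [Finset.coe_Ico, Set.mem_Ico] at ha hb
        have hk : (k : ℕ) ≤ nM := Nat.lt_succ_iff.mp k.isLt
        simp only at hab
        omega
      have himg : ∑ n ∈ Finset.Ico nM j, ‖e (n - (k : ℕ))‖
          = ∑ m ∈ (Finset.Ico nM j).image (fun n => n - (k : ℕ)), ‖e m‖ :=
        (Finset.sum_image (g := fun n => n - (k : ℕ)) (f := fun m => ‖e m‖) (fun a ha b hb => hinj ha hb)).symm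
      rw [himg]
      apply Finset.sum_le_sum_of_subset_of_nonneg
      · intro m hm
        simp only [Finset.mem_image, Finset.mem_Ico] at hm
        obtain ⟨n, hn, rfl⟩ := hm
        simp only [Finset.mem_range]
        omega
      · intro m _ _
        exact norm_nonneg _
    calc ∑ k : Fin (nM + 1), ∑ n ∈ Finset.Ico nM j, ‖e (n - (k : ℕ))‖
        ≤ ∑ _k : Fin (nM + 1), ∑ n ∈ Finset.range j, ‖e n‖ :=
          Finset.sum_le_sum (fun k _ => hone k)
      _ = (nM + 1 : ℝ) * ∑ n ∈ Finset.range j, ‖e n‖ := by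
          rw [Finset.sum_const, Finset.card_univ, Fintype.card_fin, nsmul_eq_mul]
          push_cast
          ring
  have hj' : ((j - nM : ℕ) : ℝ) ≤ (j : ℝ) := by
    exact_mod_cast Nat.sub_le j nM
  calc ‖e j‖ ≤ τmax * (((j - nM : ℕ) : ℝ) * Δt)
        + Λ * ∑ n ∈ Finset.Ico nM j, ∑ k : Fin (nM + 1), ‖e (n - (k : ℕ))‖ := H
    _ ≤ τmax * ((j : ℝ) * Δt) + Λ * ((nM + 1 : ℝ) * ∑ n ∈ Finset.range j, ‖e n‖) := by
        gcongr
    _ = τmax * ((j : ℝ) * Δt) + Λ * (nM + 1) * ∑ n ∈ Finset.range j, ‖e n‖ := by ring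
end
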